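/- Let L be a laminar family of nonempty subsets of a finite set K, let ŝ ∈ L, and let s₁ and s₂ be two distinct inclusion-maximal elements of {t ∈ L : t ⊊ ŝ} (two distinct children of ŝ). Then L ∪ {s₁ ∪ s₂} is again a laminar family. (This is the correctness of one merging step of the randomLaminar algorithm.) -/
import Mathlib


/-- If `s₁` and `s₂` are two distinct children (inclusion-maximal strict
subsets in `L`) of a member `ŝ` of a laminar family `L` of nonempty subsets of a finite set,
then `L ∪ {s₁ ∪ s₂}` is again laminar. -/
theorem stmt_8 {α : Type*} [Fintype α] [DecidableEq α] (L : Finset (Finset α))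
    (hlam : ∀ A ∈ L, ∀ B ∈ L, A ⊆ B ∨ B ⊆ A ∨ A ∩ B = ∅)
    (hne : ∀ s ∈ L, s.Nonempty)
    (shat : Finset α) (hshat : shat ∈ L)
    (s₁ s₂ : Finset α) (hs₁ : s₁ ∈ L) (hs₂ : s₂ ∈ L) (h12 : s₁ ≠ s₂)
    (hc₁ : s₁ ⊂ shat ∧ ∀ t' ∈ L, t' ⊂ shat → s₁ ⊆ t' → s₁ = t')
    (hc₂ : s₂ ⊂ shat ∧ ∀ t' ∈ L, t' ⊂ shat → s₂ ⊆ t' → s₂ = t') :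
    ∀ A ∈ insert (s₁ ∪ s₂) L, ∀ B ∈ insert (s₁ ∪ s₂) L,
      A ⊆ B ∨ B ⊆ A ∨ A ∩ B = ∅ := by
  -- helper: if s_i ⊆ t, s_j ⊂ shat, s_j ∩ t = ∅ then t = s_i
  have aux : ∀ (si sj t : Finset α), si ∈ L → sj ∈ L → t ∈ L →
      si ⊂ shat → sj ⊂ shat → (∀ t' ∈ L, t' ⊂ shat → si ⊆ t' → si = t') →
      si ⊆ t → sj ∩ t = ∅ → t = si := by
    intro si sj t hsi hsj ht hsub hsub' hmax h1 h2
    obtain ⟨y, hy⟩ := hne sj hsj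
    have hyt : y ∉ t := fun hyt =>
      (Finset.eq_empty_iff_forall_notMem.1 h2 y) (Finset.mem_inter.2 ⟨hy, hyt⟩)
    have hts : t ⊆ shat := by
      rcases hlam t ht shat hshat with h | h | h
      · exact h
      · exact absurd (h (hsub'.1 hy)) hyt
      · obtain ⟨x, hx⟩ := hne si hsi
        exact absurd (Finset.mem_inter.2 ⟨h1 hx, hsub.1 hx⟩)
          (Finset.eq_empty_iff_forall_notMem.1 h x)
    rcases eq_or_ne t shat with rfl | hne'
    · exact absurd (hsub'.1 hy) hyt
    · exact (hmax t ht (lt_of_le_of_ne hts hne') h1).symm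
  -- key: any t ∈ L is comparable or disjoint with s₁ ∪ s₂
  have key : ∀ t ∈ L, t ⊆ s₁ ∪ s₂ ∨ s₁ ∪ s₂ ⊆ t ∨ (s₁ ∪ s₂) ∩ t = ∅ := by
    intro t ht
    rcases hlam s₁ hs₁ t ht with h1 | h1 | h1
    · rcases hlam s₂ hs₂ t ht with h2 | h2 | h2
      · exact Or.inr (Or.inl (Finset.union_subset h1 h2))
      · exact Or.inl (h2.trans Finset.subset_union_right)
      · -- s₁ ⊆ t, s₂ ∩ t = ∅ ⇒ t = s₁
        have := aux s₁ s₂ t hs₁ hs₂ ht hc₁.1 hc₂.1 hc₁.2 h1 h2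
        exact Or.inl (this ▸ Finset.subset_union_left)
    · exact Or.inl (h1.trans Finset.subset_union_left)
    · rcases hlam s₂ hs₂ t ht with h2 | h2 | h2
      · have := aux s₂ s₁ t hs₂ hs₁ ht hc₂.1 hc₁.1 hc₂.2 h2 h1
        exact Or.inl (this ▸ Finset.subset_union_right)
      · exact Or.inl (h2.trans Finset.subset_union_right)
      · refine Or.inr (Or.inr ?_)
        rw [Finset.union_inter_distrib_right, Finset.inter_comm s₁ t] at *
        rw [h1, h2, Finset.union_empty]
  intro A hA B hB
  rcases Finset.mem_insert.1 hA with rfl | hA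
  · rcases Finset.mem_insert.1 hB with rfl | hB
    · exact Or.inl le_rfl
    · rcases key B hB with h | h | h
      · exact Or.inr (Or.inl h)
      · exact Or.inl h
      · exact Or.inr (Or.inr h)
  · rcases Finset.mem_insert.1 hB with rfl | hB
    · rcases key A hA with h | h | h
      · exact Or.inl h
      · exact Or.inr (Or.inl h)
      · exact Or.inr (Or.inr (by rwa [Finset.inter_comm]))
    · exact hlam A hA B hB
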